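/- For any E ∈ ℝ, any q > 0, and any u, f as in the context (i.e. u is 2π-periodic, twice continuously differentiable, and f = −u'' + i·q·W·u − E·u), one has ( ∫_{−π}^{π} W·|u|·|u'| )² ≤ C₀ · q⁻¹ · ( ∫_{−π}^{π} |f|·|u| ) · ( ∫_{−π}^{π} V·|u'|² ), where V is the model damping profile from the context. -/

import Mathlib

/-!
Pair `f` with `ū` and integrate over a period. After integrating by parts, `-u'' ū` contributes
the real number `∫ |u'|²`, and `-E |u|²` is real as well, so the imaginary part of `∫ f ū` is
exactly `q ∫ W |u|²`. This gives `q ∫ W |u|² ≤ ∫ |f| |u|`. Then the Cauchy–Schwarz inequality with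
weight `W` gives `(∫ W |u| |u'|)² ≤ ∫ W |u|² · ∫ W |u'|²`, and `W ≤ C₀ V` bounds the last factor.
-/

open Real MeasureTheory intervalIntegral

/-- The model damping profile `V(x) = 0` for `|x| ≤ σ`, `V(x) = (|x| - σ)^β` otherwise
(used only on the period `[-π, π]`). -/
noncomputable def dampV (σ β : ℝ) (x : ℝ) : ℝ :=
  if |x| ≤ σ then 0 else (|x| - σ) ^ β

open ComplexConjugate

theorem sq_integral_mul_mul_le {α : Type*} [MeasurableSpace α] {μ : Measure α} {w g h : α → ℝ}
    (hw : 0 ≤ᵐ[μ] w) (hgg : Integrable (fun x => w x * g x ^ 2) μ)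
    (hgh : Integrable (fun x => w x * g x * h x) μ) (hhh : Integrable (fun x => w x * h x ^ 2) μ) :
    (∫ x, w x * g x * h x ∂μ) ^ 2 ≤ (∫ x, w x * g x ^ 2 ∂μ) * ∫ x, w x * h x ^ 2 ∂μ := by
  set A := ∫ x, w x * g x ^ 2 ∂μ
  set B := ∫ x, w x * g x * h x ∂μ
  set C := ∫ x, w x * h x ^ 2 ∂μ
  have hquad : ∀ t : ℝ, 0 ≤ A * (t * t) + 2 * B * t + C := fun t => by
    have hexpand : (fun x => w x * (t * g x + h x) ^ 2) =
        fun x => (t * t) * (w x * g x ^ 2) + (2 * t) * (w x * g x * h x) + w x * h x ^ 2 := by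
      ext x; ring
    have hint : ∫ x, w x * (t * g x + h x) ^ 2 ∂μ = A * (t * t) + 2 * B * t + C := by
      rw [hexpand, integral_add _ hhh, integral_add (hgg.const_mul _) (hgh.const_mul _),
        MeasureTheory.integral_const_mul, MeasureTheory.integral_const_mul]
      · ring
      · exact (hgg.const_mul _).add (hgh.const_mul _)
    exact hint ▸ integral_nonneg_of_ae (hw.mono fun x hx => mul_nonneg hx (sq_nonneg _))
  have hdisc := discrim_le_zero hquad
  rw [discrim] at hdisc
  linarith

theorem sq_intervalIntegral_mul_mul_le {a b : ℝ} {w g h : ℝ → ℝ} (hab : a ≤ b)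
    (hw0 : ∀ x ∈ Set.Ioc a b, 0 ≤ w x) (hw : IntervalIntegrable w volume a b)
    (hg : ContinuousOn g (Set.uIcc a b)) (hh : ContinuousOn h (Set.uIcc a b)) :
    (∫ x in a..b, w x * g x * h x) ^ 2 ≤
      (∫ x in a..b, w x * g x ^ 2) * ∫ x in a..b, w x * h x ^ 2 := by
  simp only [intervalIntegral.integral_of_le hab]
  exact sq_integral_mul_mul_le (ae_restrict_of_forall_mem measurableSet_Ioc hw0)
    (hw.mul_continuousOn (hg.pow 2)).1 ((hw.mul_continuousOn hg).mul_continuousOn hh).1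
    (hw.mul_continuousOn (hh.pow 2)).1

theorem IntervalIntegrable.of_nonneg_of_le {μ : Measure ℝ} {a b : ℝ} {f g : ℝ → ℝ}
    (hg : IntervalIntegrable g μ a b) (hf : AEStronglyMeasurable f (μ.restrict (Set.uIoc a b)))
    (h0 : ∀ x ∈ Set.uIoc a b, 0 ≤ f x) (hle : ∀ x ∈ Set.uIoc a b, f x ≤ g x) :
    IntervalIntegrable f μ a b :=
  hg.mono_fun' hf ((ae_restrict_iff' measurableSet_uIoc).2 (ae_of_all _ fun x hx =>
    (Real.norm_of_nonneg (h0 x hx)).trans_le (hle x hx)))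

theorem integral_im_deriv_deriv_mul_conj_eq_zero {u : ℝ → ℂ} {a b : ℝ} (hu : ContDiff ℝ 2 u)
    (hua : u a = u b) (hu'a : deriv u a = deriv u b) :
    ∫ x in a..b, (deriv (deriv u) x * conj (u x)).im = 0 := by
  have hu' : ContDiff ℝ 1 (deriv u) := hu.deriv'
  -- `(u' ū)' = u'' ū + |u'|²` has the same imaginary part as `u'' ū`.
  have hderiv : ∀ x, HasDerivAt (fun y => (deriv u y * conj (u y)).im)
      (deriv (deriv u) x * conj (u x)).im x := fun x => by
    refine (Complex.imCLM.hasFDerivAt.comp_hasDerivAt x <|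
      (hu'.differentiable one_ne_zero x).hasDerivAt.mul
        (hu.differentiable two_ne_zero x).hasDerivAt.star).congr_deriv ?_
    simp [Complex.mul_im, mul_comm]
  have hcont : Continuous fun x => (deriv (deriv u) x * conj (u x)).im := by
    have := hu'.continuous_deriv le_rfl; have := hu.continuous; fun_prop
  rw [integral_eq_sub_of_hasDerivAt (fun x _ => hderiv x) (hcont.intervalIntegrable _ _), hua,
    hu'a, sub_self]

theorem mul_integral_mul_norm_sq_le_integral_norm_mul_norm {u f : ℝ → ℂ} {W : ℝ → ℝ}
    {a b q E : ℝ} (hab : a ≤ b) (hW : IntervalIntegrable W volume a b) (hu : ContDiff ℝ 2 u)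
    (hua : u a = u b) (hu'a : deriv u a = deriv u b)
    (hf : ∀ x, f x = -(deriv (deriv u) x) + Complex.I * q * W x * u x - E * u x) :
    q * ∫ x in a..b, W x * ‖u x‖ ^ 2 ≤ ∫ x in a..b, ‖f x‖ * ‖u x‖ := by
  have hu'' : Continuous (deriv (deriv u)) := hu.deriv'.continuous_deriv le_rfl
  have him : ∀ x, (f x * conj (u x)).im =
      q * (W x * ‖u x‖ ^ 2) - (deriv (deriv u) x * conj (u x)).im := fun x => by
    rw [hf x, ← Complex.normSq_eq_norm_sq]
    simp only [Complex.mul_im, Complex.mul_re, Complex.add_re, Complex.add_im, Complex.sub_re,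
      Complex.sub_im, Complex.neg_re, Complex.neg_im, Complex.I_re, Complex.I_im, Complex.ofReal_re,
      Complex.ofReal_im, Complex.conj_re, Complex.conj_im, Complex.normSq_apply]
    ring
  have hWℂ : IntervalIntegrable (fun x => (W x : ℂ)) volume a b := ⟨hW.1.ofReal, hW.2.ofReal⟩
  have hf_int : IntervalIntegrable f volume a b := by
    rw [funext hf]
    exact ((hu''.neg.intervalIntegrable _ _).add
      ((hWℂ.const_mul _).mul_continuousOn hu.continuous.continuousOn)).sub
      ((continuous_const.mul hu.continuous).intervalIntegrable _ _)
  have hWu : IntervalIntegrable (fun x => q * (W x * ‖u x‖ ^ 2)) volume a b :=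
    (hW.mul_continuousOn (hu.continuous.norm.pow 2).continuousOn).const_mul q
  have hu''u : Continuous fun x => (deriv (deriv u) x * conj (u x)).im := by
    have := hu.continuous; fun_prop
  calc q * ∫ x in a..b, W x * ‖u x‖ ^ 2
      = ∫ x in a..b, (q * (W x * ‖u x‖ ^ 2) - (deriv (deriv u) x * conj (u x)).im) := by
        rw [intervalIntegral.integral_sub hWu (hu''u.intervalIntegrable _ _),
          intervalIntegral.integral_const_mul,
          integral_im_deriv_deriv_mul_conj_eq_zero hu hua hu'a, sub_zero]
    _ ≤ ∫ x in a..b, ‖f x‖ * ‖u x‖ := by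
        refine integral_mono_on hab (hWu.sub (hu''u.intervalIntegrable _ _))
          (hf_int.norm.mul_continuousOn hu.continuous.norm.continuousOn) fun x _ => ?_
        rw [← him, ← Complex.norm_conj (u x), ← norm_mul]
        exact Complex.im_le_norm _

theorem Function.Periodic.deriv {𝕜 F : Type*} [NontriviallyNormedField 𝕜] [NormedAddCommGroup F]
    [NormedSpace 𝕜 F] {f : 𝕜 → F} {c : 𝕜} (h : Function.Periodic f c) :
    Function.Periodic (deriv f) c := fun x => by
  rw [← deriv_comp_add_const, h.funext]

theorem measurable_dampV (σ β : ℝ) : Measurable (dampV σ β) :=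
  Measurable.ite (measurableSet_le measurable_abs measurable_const) measurable_const
    ((measurable_abs.sub measurable_const).pow_const β)

theorem dampV_nonneg (σ β x : ℝ) : 0 ≤ dampV σ β x := by
  unfold dampV
  split_ifs with hx
  · exact le_rfl
  · exact Real.rpow_nonneg (by linarith [not_le.mp hx]) β

theorem damped_wave_W_u_u'_estimate_general
    (C₀ σ β : ℝ) (hC₀ : 0 < C₀)
    (W : ℝ → ℝ) (hWmeas : Measurable W)
    (hWbdd : ∃ M : ℝ, ∀ x : ℝ, W x ≤ M) (hWnonneg : ∀ x : ℝ, 0 ≤ W x)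
    (hWV : ∀ x ∈ Set.Icc (-π) π,
      dampV σ β x / C₀ ≤ W x ∧ W x ≤ C₀ * dampV σ β x)
    (q E : ℝ) (hq : 0 < q)
    (u f : ℝ → ℂ) (hu : ContDiff ℝ 2 u) (huper : Function.Periodic u (2 * π))
    (hf : ∀ x : ℝ,
      f x = -(deriv (deriv u) x) + Complex.I * q * W x * u x - E * u x) :
    (∫ x in (-π)..π, W x * ‖u x‖ * ‖deriv u x‖) ^ 2 ≤
      C₀ * q⁻¹ * (∫ x in (-π)..π, ‖f x‖ * ‖u x‖) *
        ∫ x in (-π)..π, dampV σ β x * ‖deriv u x‖ ^ 2 := by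
  obtain ⟨M, hM⟩ := hWbdd
  have hπ : -π ≤ π := by linarith [pi_pos]
  have hW : IntervalIntegrable W volume (-π) π :=
    (intervalIntegrable_const (c := M)).of_nonneg_of_le hWmeas.aestronglyMeasurable
      (fun x _ => hWnonneg x) fun x _ => hM x
  have hV : IntervalIntegrable (dampV σ β) volume (-π) π :=
    (hW.const_mul C₀).of_nonneg_of_le (measurable_dampV σ β).aestronglyMeasurable
      (fun x _ => dampV_nonneg σ β x) fun x hx =>
        (div_le_iff₀' hC₀).1 (hWV x (Set.Ioc_subset_Icc_self (Set.uIoc_of_le hπ ▸ hx))).1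
  have hu' : Continuous (deriv u) := hu.continuous_deriv one_le_two
  have habsorb := mul_integral_mul_norm_sq_le_integral_norm_mul_norm hπ hW hu
    ((huper (-π)).symm.trans (congrArg u (by ring)))
    ((huper.deriv (-π)).symm.trans (congrArg (deriv u) (by ring))) hf
  have hcs := sq_intervalIntegral_mul_mul_le hπ (fun x _ => hWnonneg x) hW
    hu.continuous.norm.continuousOn hu'.norm.continuousOn
  have hcompare : ∫ x in (-π)..π, W x * ‖deriv u x‖ ^ 2 ≤
      C₀ * ∫ x in (-π)..π, dampV σ β x * ‖deriv u x‖ ^ 2 := by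
    rw [← intervalIntegral.integral_const_mul]
    refine integral_mono_on hπ (hW.mul_continuousOn (hu'.norm.pow 2).continuousOn)
      ((hV.mul_continuousOn (hu'.norm.pow 2).continuousOn).const_mul C₀) fun x hx => ?_
    rw [← mul_assoc]
    exact mul_le_mul_of_nonneg_right (hWV x hx).2 (sq_nonneg _)
  calc _ ≤ _ := hcs
    _ ≤ (q⁻¹ * ∫ x in (-π)..π, ‖f x‖ * ‖u x‖) *
          (C₀ * ∫ x in (-π)..π, dampV σ β x * ‖deriv u x‖ ^ 2) :=
      mul_le_mul ((le_inv_mul_iff₀ hq).2 habsorb) hcompare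
        (intervalIntegral.integral_nonneg hπ fun x _ => mul_nonneg (hWnonneg x) (sq_nonneg _))
        (mul_nonneg (inv_nonneg.2 hq.le)
          (intervalIntegral.integral_nonneg hπ fun x _ => by positivity))
    _ = _ := by ring

/-- `(∫ W |u| |u'|)² ≤ C₀ q⁻¹ (∫ |f| |u|) (∫ V |u'|²)`. -/
theorem damped_wave_W_u_u'_estimate
    (C₀ σ β : ℝ) (hC₀ : 0 < C₀) (hσ : σ ∈ Set.Ioo 0 π) (hβ : 0 ≤ β)
    (W : ℝ → ℝ) (hWper : Function.Periodic W (2 * π)) (hWmeas : Measurable W)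
    (hWbdd : ∃ M : ℝ, ∀ x : ℝ, W x ≤ M) (hWnonneg : ∀ x : ℝ, 0 ≤ W x)
    (hWV : ∀ x ∈ Set.Icc (-π) π,
      dampV σ β x / C₀ ≤ W x ∧ W x ≤ C₀ * dampV σ β x)
    (q E : ℝ) (hq : 0 < q)
    (u f : ℝ → ℂ) (hu : ContDiff ℝ 2 u) (huper : Function.Periodic u (2 * π))
    (hf : ∀ x : ℝ,
      f x = -(deriv (deriv u) x) + Complex.I * q * W x * u x - E * u x) :
    (∫ x in (-π)..π, W x * ‖u x‖ * ‖deriv u x‖) ^ 2 ≤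
      C₀ * q⁻¹ * (∫ x in (-π)..π, ‖f x‖ * ‖u x‖) *
        ∫ x in (-π)..π, dampV σ β x * ‖deriv u x‖ ^ 2 :=
  damped_wave_W_u_u'_estimate_general C₀ σ β hC₀ W hWmeas hWbdd hWnonneg hWV q E hq u f hu huper hf
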